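/- Let k ≥ 1, let 0 = t₀ < t₁ < ⋯ < t_{k−1} < t_k = ∞ and y₁,…,y_k > 0, and let η : [0,∞) → (0,∞) be the piecewise-constant function with η(t) = y_j for t ∈ [t_{j−1}, t_j). Set x_j = exp(−(t_j − t_{j−1})/y_j) for j = 1,…,k−1 and x_k = 0. Then for every integer m ≥ 2, the expected first coalescence time c_m = ∫₀^∞ t · (C(m,2)/η(t)) · exp(−C(m,2) ∫₀^t η(u)^{−1} du) dt equals (1/C(m,2)) · Σ_{j=1}^{k} y_j (∏_{l=1}^{j−1} x_l^{C(m,2)}) (1 − x_j^{C(m,2)}), where C(m,2) = m(m−1)/2 and the empty product equals 1. -/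

import Mathlib

open MeasureTheory Real Finset Filter Topology Set

/-!
Write `Λ(s) = ∫₀ˢ η⁻¹`, `N = C(m,2)` and `P_j = ∏_{l ≤ j} x_l^N`. On the epoch `(t_j, t_{j+1})`
the rate `η` is the constant `y_{j+1}`, so `Λ` is affine there, `e^{-N Λ(t_j)} = P_j`, and the
integrand is `P_j · s c e^{-c (s - t_j)}` with `c = N / y_{j+1}`. Its antiderivative
`-(s + 1/c) e^{-c (s - t_j)}` shows that the epoch contributes
`P_j (t_j + y_{j+1}/N) - P_{j+1} (t_{j+1} + y_{j+1}/N)`, also for the infinite last epoch because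
`x_k = 0` makes `P_k = 0`. Summing, the terms in `t` telescope to `P_0 t_0 = 0` and the rest is
`(1/N) Σ_j y_{j+1} (P_j - P_{j+1})`.
-/

section ExponentialMoment

variable {a c : ℝ}

theorem hasDerivAt_neg_add_inv_mul_exp_neg_mul_sub (hc : c ≠ 0) (u : ℝ) :
    HasDerivAt (fun v => -((v + c⁻¹) * exp (-(c * (v - a)))))
      (u * c * exp (-(c * (u - a)))) u := by
  have h : HasDerivAt (fun v => -(c * (v - a))) (-c) u := by
    simpa using ((hasDerivAt_id u).sub_const a).const_mul (-c)
  refine (((hasDerivAt_id u).add_const c⁻¹).mul h.exp).neg.congr_deriv ?_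
  simp only [id]
  field_simp
  ring

theorem tendsto_neg_add_inv_mul_exp_neg_mul_sub_atTop (hc : 0 < c) :
    Tendsto (fun v => -((v + c⁻¹) * exp (-(c * (v - a))))) atTop (𝓝 0) := by
  have hpow (s : ℝ) :=
    (tendsto_rpow_mul_exp_neg_mul_atTop_nhds_zero s c hc).const_mul (exp (c * a))
  have h := ((hpow 1).add ((hpow 0).const_mul c⁻¹)).neg
  simp only [mul_zero, add_zero, neg_zero, rpow_one, rpow_zero] at h
  refine h.congr fun v => ?_
  rw [show -(c * (v - a)) = c * a + -c * v by ring, exp_add]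
  ring

theorem integral_mul_mul_exp_neg_mul_sub (hc : c ≠ 0) (b : ℝ) :
    ∫ u in a..b, u * c * exp (-(c * (u - a))) =
      a + c⁻¹ - (b + c⁻¹) * exp (-(c * (b - a))) := by
  rw [intervalIntegral.integral_eq_sub_of_hasDerivAt
    (fun u _ => hasDerivAt_neg_add_inv_mul_exp_neg_mul_sub hc u)
    ((by fun_prop : Continuous fun u => u * c * exp (-(c * (u - a)))).intervalIntegrable _ _)]
  simp only [sub_self, mul_zero, neg_zero, exp_zero]
  ring

theorem integrableOn_Ioi_mul_mul_exp_neg_mul_sub (ha : 0 ≤ a) (hc : 0 < c) :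
    IntegrableOn (fun u => u * c * exp (-(c * (u - a)))) (Ioi a) :=
  integrableOn_Ioi_deriv_of_nonneg
    (hasDerivAt_neg_add_inv_mul_exp_neg_mul_sub hc.ne' a).continuousAt.continuousWithinAt
    (fun u _ => hasDerivAt_neg_add_inv_mul_exp_neg_mul_sub hc.ne' u)
    (fun u hu => by have : 0 ≤ u := ha.trans (le_of_lt hu); positivity)
    (tendsto_neg_add_inv_mul_exp_neg_mul_sub_atTop hc)

theorem integral_Ioi_mul_mul_exp_neg_mul_sub (ha : 0 ≤ a) (hc : 0 < c) :
    ∫ u in Ioi a, u * c * exp (-(c * (u - a))) = a + c⁻¹ := by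
  rw [integral_Ioi_of_hasDerivAt_of_nonneg
    (hasDerivAt_neg_add_inv_mul_exp_neg_mul_sub hc.ne' a).continuousAt.continuousWithinAt
    (fun u _ => hasDerivAt_neg_add_inv_mul_exp_neg_mul_sub hc.ne' u)
    (fun u hu => by have : 0 ≤ u := ha.trans (le_of_lt hu); positivity)
    (tendsto_neg_add_inv_mul_exp_neg_mul_sub_atTop hc)]
  simp

end ExponentialMoment

section PiecewiseConstant

theorem intervalIntegrable_of_eqOn_Ioo {f : ℝ → ℝ} {a b c : ℝ} (hab : a ≤ b)
    (h : EqOn f (fun _ => c) (Ioo a b)) : IntervalIntegrable f volume a b :=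
  intervalIntegrable_const.congr_uIoo (by rw [uIoo_of_le hab]; exact h.symm)

theorem integral_eq_add_of_eqOn_Ioo {f : ℝ → ℝ} {z a b c : ℝ}
    (hf : IntervalIntegrable f volume z a) (hab : a ≤ b) (h : EqOn f (fun _ => c) (Ioo a b)) :
    ∫ u in z..b, f u = (∫ u in z..a, f u) + (b - a) * c := by
  rw [← intervalIntegral.integral_add_adjacent_intervals hf
      (intervalIntegrable_of_eqOn_Ioo hab h),
    intervalIntegral.integral_congr_Ioo_of_le hab h, intervalIntegral.integral_const, smul_eq_mul]

theorem integral_inv_eq_sum_of_eqOn_Ioo {η : ℝ → ℝ} {t y : ℕ → ℝ} {n : ℕ}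
    (ht : ∀ j < n, t j ≤ t (j + 1))
    (hη : ∀ j < n, EqOn η (fun _ => y (j + 1)) (Ioo (t j) (t (j + 1)))) :
    ∫ u in t 0..t n, (η u)⁻¹ = ∑ j ∈ range n, (t (j + 1) - t j) / y (j + 1) := by
  have hinv :
      ∀ j < n, EqOn (fun u => (η u)⁻¹) (fun _ => (y (j + 1))⁻¹) (Ioo (t j) (t (j + 1))) :=
    fun j hj u hu => congrArg Inv.inv (hη j hj hu)
  rw [← intervalIntegral.sum_integral_adjacent_intervals
    fun j hj => intervalIntegrable_of_eqOn_Ioo (ht j hj) (hinv j hj)]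
  refine sum_congr rfl fun j hj => ?_
  rw [intervalIntegral.integral_congr_Ioo_of_le (ht j (mem_range.1 hj)) (hinv j (mem_range.1 hj)),
    intervalIntegral.integral_const, smul_eq_mul, div_eq_mul_inv]

end PiecewiseConstant

noncomputable def coalescenceIntegrand (η : ℝ → ℝ) (r s : ℝ) : ℝ :=
  s * (r / η s) * exp (-r * ∫ u in (0 : ℝ)..s, (η u)⁻¹)

section Epoch

variable {η : ℝ → ℝ} {a y r : ℝ}

theorem coalescenceIntegrand_eq_of_eqOn_Ioc
    (h0a : IntervalIntegrable (fun u => (η u)⁻¹) volume 0 a) {s : ℝ} (has : a < s)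
    (hη : EqOn η (fun _ => y) (Ioc a s)) :
    coalescenceIntegrand η r s =
      exp (-r * ∫ u in (0 : ℝ)..a, (η u)⁻¹) * (s * (r / y) * exp (-(r / y * (s - a)))) := by
  have hΛ := integral_eq_add_of_eqOn_Ioo h0a has.le
    fun u hu => congrArg Inv.inv (hη (Ioo_subset_Ioc_self hu))
  rw [coalescenceIntegrand, hη ⟨has, le_rfl⟩, hΛ,
    show -r * ((∫ u in (0 : ℝ)..a, (η u)⁻¹) + (s - a) * y⁻¹) =
      -r * (∫ u in (0 : ℝ)..a, (η u)⁻¹) + -(r / y * (s - a)) by ring, exp_add]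
  ring

theorem integral_coalescenceIntegrand_of_eqOn_Ioo
    (h0a : IntervalIntegrable (fun u => (η u)⁻¹) volume 0 a) {b : ℝ}
    (hab : a ≤ b) (hη : EqOn η (fun _ => y) (Ioo a b)) (hr : r ≠ 0) (hy : y ≠ 0) :
    ∫ s in a..b, coalescenceIntegrand η r s =
      exp (-r * ∫ u in (0 : ℝ)..a, (η u)⁻¹) *
        (a + y / r - (b + y / r) * exp (-(r / y * (b - a)))) := by
  rw [intervalIntegral.integral_congr_Ioo_of_le hab fun s hs =>
      coalescenceIntegrand_eq_of_eqOn_Ioc h0a hs.1 (hη.mono (Ioc_subset_Ioo_right hs.2)),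
    intervalIntegral.integral_const_mul, integral_mul_mul_exp_neg_mul_sub (div_ne_zero hr hy),
    inv_div]

theorem intervalIntegrable_coalescenceIntegrand_of_eqOn_Ioo
    (h0a : IntervalIntegrable (fun u => (η u)⁻¹) volume 0 a) {b : ℝ}
    (hab : a ≤ b) (hη : EqOn η (fun _ => y) (Ioo a b)) :
    IntervalIntegrable (coalescenceIntegrand η r) volume a b := by
  refine ((by fun_prop : Continuous fun s => exp (-r * ∫ u in (0 : ℝ)..a, (η u)⁻¹) *
    (s * (r / y) * exp (-(r / y * (s - a))))).intervalIntegrable a b).congr_uIoo ?_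
  rw [uIoo_of_le hab]
  exact fun s hs =>
    (coalescenceIntegrand_eq_of_eqOn_Ioc h0a hs.1 (hη.mono (Ioc_subset_Ioo_right hs.2))).symm

theorem integrableOn_Ioi_coalescenceIntegrand_of_eqOn_Ioi
    (h0a : IntervalIntegrable (fun u => (η u)⁻¹) volume 0 a)
    (ha : 0 ≤ a) (hη : EqOn η (fun _ => y) (Ioi a)) (hr : 0 < r) (hy : 0 < y) :
    IntegrableOn (coalescenceIntegrand η r) (Ioi a) :=
  IntegrableOn.congr_fun ((integrableOn_Ioi_mul_mul_exp_neg_mul_sub ha (div_pos hr hy)).const_mul _)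
    (fun _ hs => (coalescenceIntegrand_eq_of_eqOn_Ioc h0a hs
      (hη.mono Ioc_subset_Ioi_self)).symm) measurableSet_Ioi

theorem integral_Ioi_coalescenceIntegrand_of_eqOn_Ioi
    (h0a : IntervalIntegrable (fun u => (η u)⁻¹) volume 0 a)
    (ha : 0 ≤ a) (hη : EqOn η (fun _ => y) (Ioi a)) (hr : 0 < r) (hy : 0 < y) :
    ∫ s in Ioi a, coalescenceIntegrand η r s =
      exp (-r * ∫ u in (0 : ℝ)..a, (η u)⁻¹) * (a + y / r) := by
  rw [setIntegral_congr_fun measurableSet_Ioi fun s hs =>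
      coalescenceIntegrand_eq_of_eqOn_Ioc h0a hs (hη.mono Ioc_subset_Ioi_self),
    integral_const_mul, integral_Ioi_mul_mul_exp_neg_mul_sub ha (div_pos hr hy), inv_div]

end Epoch

theorem integral_Ioi_eq_sum_intervalIntegral_add {f : ℝ → ℝ} {t : ℕ → ℝ} {n : ℕ}
    (hf : ∀ j < n, IntervalIntegrable f volume (t j) (t (j + 1)))
    (hlast : IntegrableOn f (Ioi (t n))) :
    ∫ s in Ioi (t 0), f s =
      (∑ j ∈ range n, ∫ s in t j..t (j + 1), f s) + ∫ s in Ioi (t n), f s := by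
  rw [intervalIntegral.sum_integral_adjacent_intervals hf,
    intervalIntegral.integral_interval_add_Ioi' (IntervalIntegrable.trans_iterate hf) hlast]

theorem sum_range_sub_mul_add_div_eq {P t y : ℕ → ℝ} (r : ℝ) (n : ℕ) (ht0 : t 0 = 0)
    (hPn : P n = 0) :
    ∑ j ∈ range n, (P j * (t j + y (j + 1) / r) - P (j + 1) * (t (j + 1) + y (j + 1) / r)) =
      1 / r * ∑ j ∈ range n, y (j + 1) * (P j - P (j + 1)) := by
  have hsplit : ∀ j, P j * (t j + y (j + 1) / r) - P (j + 1) * (t (j + 1) + y (j + 1) / r) =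
      (P j * t j - P (j + 1) * t (j + 1)) + 1 / r * (y (j + 1) * (P j - P (j + 1))) :=
    fun j => by ring
  simp only [hsplit, sum_add_distrib, sum_range_sub' fun j => P j * t j, ← mul_sum, ht0, hPn]
  ring

theorem integral_Ioi_coalescenceIntegrand_of_epochs
    (n : ℕ) (t : ℕ → ℝ) (ht0 : t 0 = 0) (ht : ∀ j < n, t j ≤ t (j + 1))
    (y : ℕ → ℝ) (hy : ∀ j ≤ n, 0 < y (j + 1)) (η : ℝ → ℝ)
    (hη : ∀ j < n, EqOn η (fun _ => y (j + 1)) (Ioo (t j) (t (j + 1))))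
    (hηlast : EqOn η (fun _ => y (n + 1)) (Ioi (t n)))
    (x : ℕ → ℝ) (hx : ∀ j < n, x (j + 1) = exp (-(t (j + 1) - t j) / y (j + 1)))
    (hxlast : x (n + 1) = 0) (N : ℕ) (hN : 0 < N) :
    ∫ s in Ioi 0, coalescenceIntegrand η N s =
      1 / N * ∑ j ∈ range (n + 1),
        y (j + 1) * (∏ i ∈ range j, x (i + 1) ^ N) * (1 - x (j + 1) ^ N) := by
  set P : ℕ → ℝ := fun j => ∏ i ∈ range j, x (i + 1) ^ N
  have hr : (0 : ℝ) < N := by exact_mod_cast hN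
  have hPsucc (j : ℕ) : P (j + 1) = P j * x (j + 1) ^ N := prod_range_succ _ _
  have hint (j : ℕ) (hj : j ≤ n) :
      IntervalIntegrable (fun u => (η u)⁻¹) volume 0 (t j) := by
    rw [← ht0]
    exact IntervalIntegrable.trans_iterate fun i hi => intervalIntegrable_of_eqOn_Ioo
      (ht i (by omega)) fun u hu => congrArg Inv.inv (hη i (by omega) hu)
  have hsurv (j : ℕ) (hj : j ≤ n) : exp (-N * ∫ u in (0 : ℝ)..t j, (η u)⁻¹) = P j := by
    rw [← ht0, integral_inv_eq_sum_of_eqOn_Ioo (fun i hi => ht i (by omega))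
      (fun i hi => hη i (by omega)), mul_sum, exp_sum]
    refine prod_congr rfl fun i hi => ?_
    rw [hx i (by have := mem_range.1 hi; omega), ← exp_nat_mul]
    ring_nf
  have htn : 0 ≤ t n := by
    rw [← ht0, ← sub_nonneg, ← sum_range_sub]
    exact sum_nonneg fun j hj => sub_nonneg.2 (ht j (mem_range.1 hj))
  have hepoch (j : ℕ) (hj : j < n) :
      ∫ s in t j..t (j + 1), coalescenceIntegrand η N s =
        P j * (t j + y (j + 1) / N) - P (j + 1) * (t (j + 1) + y (j + 1) / N) := by
    rw [integral_coalescenceIntegrand_of_eqOn_Ioo (hint j hj.le) (ht j hj) (hη j hj) hr.ne'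
      (hy j hj.le).ne', hsurv j hj.le, hPsucc, hx j hj, ← exp_nat_mul]
    ring_nf
  have htail :
      ∫ s in Ioi (t n), coalescenceIntegrand η N s =
        P n * (t n + y (n + 1) / N) - P (n + 1) * (t (n + 1) + y (n + 1) / N) := by
    rw [integral_Ioi_coalescenceIntegrand_of_eqOn_Ioi (hint n le_rfl) htn hηlast hr
      (hy n le_rfl), hsurv n le_rfl, hPsucc, hxlast, zero_pow hN.ne']
    ring
  rw [show Ioi (0 : ℝ) = Ioi (t 0) by rw [ht0], integral_Ioi_eq_sum_intervalIntegral_add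
      (fun j hj => intervalIntegrable_coalescenceIntegrand_of_eqOn_Ioo (hint j hj.le) (ht j hj)
        (hη j hj))
      (integrableOn_Ioi_coalescenceIntegrand_of_eqOn_Ioi (hint n le_rfl) htn hηlast hr
        (hy n le_rfl)),
    sum_congr rfl fun j hj => hepoch j (mem_range.1 hj), htail, ← sum_range_succ,
    sum_range_sub_mul_add_div_eq _ _ ht0 (by rw [hPsucc, hxlast, zero_pow hN.ne', mul_zero])]
  exact congrArg _ (sum_congr rfl fun j _ => by rw [hPsucc]; ring)

@[to_additive sum_Icc_one_eq_sum_range]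
theorem prod_Icc_one_eq_prod_range {M : Type*} [CommMonoid M] (f : ℕ → M) (n : ℕ) :
    ∏ l ∈ Icc 1 n, f l = ∏ i ∈ range n, f (i + 1) := by
  rw [range_eq_Ico, prod_Ico_add', zero_add, Finset.Ico_add_one_right_eq_Icc]

theorem expected_coalescence_time_piecewise_constant
    (k : ℕ) (hk : 1 ≤ k)
    (t : ℕ → ℝ) (ht0 : t 0 = 0)
    (htmono : ∀ j, 1 ≤ j → j ≤ k - 1 → t (j - 1) < t j)
    (y : ℕ → ℝ) (hy : ∀ j, 1 ≤ j → j ≤ k → 0 < y j)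
    (η : ℝ → ℝ)
    (hη : ∀ j, 1 ≤ j → j ≤ k - 1 → ∀ s ∈ Set.Ico (t (j - 1)) (t j), η s = y j)
    (hηlast : ∀ s, t (k - 1) ≤ s → η s = y k)
    (x : ℕ → ℝ)
    (hx : ∀ j, 1 ≤ j → j ≤ k - 1 → x j = Real.exp (-(t j - t (j - 1)) / y j))
    (hxk : x k = 0)
    (m : ℕ) (hm : 2 ≤ m) :
    (∫ s in Set.Ioi (0 : ℝ),
        s * ((m.choose 2 : ℝ) / η s) *
          Real.exp (-(m.choose 2 : ℝ) * ∫ u in (0 : ℝ)..s, (η u)⁻¹)) =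
      (1 / (m.choose 2 : ℝ)) *
        ∑ j ∈ Finset.Icc 1 k,
          y j * (∏ l ∈ Finset.Icc 1 (j - 1), x l ^ m.choose 2) *
            (1 - x j ^ m.choose 2) := by
  obtain ⟨n, rfl⟩ : ∃ n, k = n + 1 := ⟨k - 1, by omega⟩
  simp only [Nat.add_sub_cancel] at htmono hη hηlast hx
  rw [sum_Icc_one_eq_sum_range]
  simp only [Nat.add_sub_cancel, prod_Icc_one_eq_prod_range]
  exact integral_Ioi_coalescenceIntegrand_of_epochs n t ht0
    (fun j hj => by simpa using (htmono (j + 1) (by omega) (by omega)).le)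
    y (fun j hj => hy (j + 1) (by omega) (by omega)) η
    (fun j hj s hs => by simpa using hη (j + 1) (by omega) (by omega) s ⟨hs.1.le, hs.2⟩)
    (fun s hs => hηlast s (le_of_lt hs))
    x (fun j hj => by simpa using hx (j + 1) (by omega) (by omega)) hxk
    (m.choose 2) (Nat.choose_pos hm)
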